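/- Let q be an odd prime power, k ≥ 3, and let G be an arc of F_q^k with |G| ≥ k and a fixed linear order. Then the column space of the matrix M_{|G|−k} (the matrix M_n with n = |G|−k, whose columns are indexed by pairs (A, E) with E ⊆ G of size k and A ⊆ E of size k−2) contains a vector of weight one. -/

import Mathlib

open Finset

variable {F : Type*} [Field F]

/-- An *arc*: every `k`-subset is a set of linearly independent vectors
(hence a basis of `F^k`). -/
def IsArc {k : ℕ} (S : Set (Fin k → F)) : Prop :=
  ∀ T : Finset (Fin k → F), ↑T ⊆ S → T.card = k →
    LinearIndependent F (Subtype.val : {x // x ∈ T} → (Fin k → F))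

/-- The *weight* of a vector: its number of nonzero coordinates. -/
noncomputable def weight {ι : Type*} (w : ι → F) : ℕ := Nat.card {i // w i ≠ 0}

/-- `det(u, C)`: the determinant of the `k × k` matrix whose first row is `u` and whose
remaining rows are the vectors `g i`, `i ∈ C`, listed in increasing order of the index set. -/
noncomputable def detWith {k m : ℕ} (g : Fin m → Fin k → F)
    (u : Fin k → F) (C : Finset (Fin m)) : F :=
  if h : C.card + 1 = k then
    Matrix.det (Matrix.of ((Fin.cons u fun j => g (C.orderEmbOfFin rfl j)) ∘ Fin.cast h.symm))
  else 0

/-- The matrix `M_n` associated to an ordered arc `g : Fin m → (Fin k → F)`. -/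
noncomputable def arcMatrix {k m : ℕ} (g : Fin m → Fin k → F) (n : ℕ) :
    Matrix {C : Finset (Fin m) // C.card = k - 1}
      {AE : Finset (Fin m) × Finset (Fin m) //
        AE.2.card = m - n ∧ AE.1 ⊆ AE.2 ∧ AE.1.card = k - 2} F :=
  fun C AE =>
    if AE.1.1 ⊆ C.1 then ∏ u ∈ Finset.univ \ AE.1.2, detWith g (g u) C.1 else 0

/-- `det(z, Y₁, …, Y_{k-1})`. -/
noncomputable def detRows {k : ℕ} (z : Fin k → F) (Y : Fin (k - 1) → Fin k → F) : F :=
  if h : k - 1 + 1 = k then Matrix.det (Matrix.of ((Fin.cons z Y) ∘ Fin.cast h.symm)) else 0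

/-- `d_A(u,v) = det(u, v, p₁, …, p_{k-2})` for an ordered tuple `A = (p₁, …, p_{k-2})`. -/
noncomputable def dA {k : ℕ} (p : Fin (k - 2) → Fin k → F) (u v : Fin k → F) : F :=
  if h : k - 2 + 1 + 1 = k then
    Matrix.det (Matrix.of ((Fin.cons u (Fin.cons v p)) ∘ Fin.cast h.symm))
  else 0

/-- `f` is a tangent polynomial for the `(k-2)`-subset `A` of the arc `S`:
a product of `t` pairwise linearly independent linear forms whose kernels meet `S` in `A`. -/
def IsTangentPoly {k : ℕ} (t : ℕ) (S A : Set (Fin k → F)) (f : (Fin k → F) → F) : Prop :=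
  ∃ α : Fin t → ((Fin k → F) →ₗ[F] F),
    (∀ i j, i ≠ j → LinearIndependent F ![α i, α j]) ∧
    (∀ i, S ∩ {x | α i x = 0} = A) ∧
    ∀ x, f x = ∏ i, α i x

/-- Compatible families `(α_A)` (on `(k-2)`-subsets) and `(α_C)` (on `(k-1)`-subsets)
of nonzero scalars, relative to the tangent polynomials `f`. -/
def CompatibleFamilies {k m : ℕ} (t : ℕ) (g : Fin m → Fin k → F)
    (f : Finset (Fin m) → (Fin k → F) → F) (a c : Finset (Fin m) → F) : Prop :=
  (∀ A : Finset (Fin m), A.card = k - 2 → a A ≠ 0) ∧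
  (∀ C : Finset (Fin m), C.card = k - 1 → c C ≠ 0) ∧
  ∀ A : Finset (Fin m), A.card = k - 2 → ∀ e, e ∉ A →
    c (insert e A) =
      (-1 : F) ^ ((A.filter fun i => e < i).card * (t + 1)) * a A * f A (g e)

/-- The polynomial `φ(Y₁, …, Y_{k-1}) = Σ_C (α_C)^e ∏_{z ∈ E∖C} det(z,Y)/det(z,C)`. -/
noncomputable def phiPoly {k M : ℕ} (e : ℕ) (g : Fin M → Fin k → F)
    (c : Finset (Fin M) → F) (E : Finset (Fin M)) (Y : Fin (k - 1) → Fin k → F) : F :=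
  ∑ C ∈ E.powersetCard (k - 1), (c C) ^ e *
    ∏ z ∈ E \ C, detRows (g z) Y / detWith g (g z) C

/-- `(G, n)` has *Property W*. -/
def PropertyW {k m : ℕ} (g : Fin m → Fin k → F) (n : ℕ) : Prop :=
  ∀ A : Finset (Fin m), A.card = k - 2 →
    ∃ (C : Finset (Fin m)) (Cs : Fin (m - n - k + 1) → Finset (Fin m)),
      C.card = k - 1 ∧ A ⊆ C ∧
      (∀ i, (Cs i).card = k - 1 ∧ A ⊆ Cs i ∧ Cs i ≠ C) ∧
      Function.Injective Cs ∧
      ∀ i, ∃ x, ∀ D : {C : Finset (Fin m) // C.card = k - 1},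
        ((arcMatrix g n).mulVec x) D ≠ 0 ↔ (D.1 = C ∨ D.1 = Cs i)

/-!
Fix a `k`-subset `E` of the arc. In every column `(A, E)` of `M_{|G|-k}` the entry in row `C` is
`P(C) = ∏_{u ∉ E} det(u, C)` when `A ⊆ C`, and `P(C)` vanishes unless `C ⊆ E`, while for `C ⊆ E` it is
nonzero because `G` is an arc. Writing `C = E ∖ {x}`, the column `(E ∖ {a, b}, E)` is thus supported
exactly on the rows `E ∖ {a}` and `E ∖ {b}`: up to the row scaling `P`, these columns form the
incidence matrix of the complete graph on `E`. For a triangle `a, b, c` in `E`, the combination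
`(E ∖ {a, b}) + (E ∖ {a, c}) - (E ∖ {b, c})` of columns is `2 P(E ∖ {a})` at `E ∖ {a}` and zero
elsewhere, and `2 ≠ 0` since `q` is odd.
-/

lemma two_ne_zero_of_odd_card [Fintype F] (hq : Odd (Fintype.card F)) : (2 : F) ≠ 0 :=
  Ring.two_ne_zero fun h =>
    Nat.not_even_iff_odd.mpr hq (Nat.even_iff.mpr (FiniteField.even_card_iff_char_two.mp h))

lemma weight_eq_one_of_ne_zero_iff {ι : Type*} {w : ι → F} (i : ι) (h : ∀ j, w j ≠ 0 ↔ j = i) :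
    weight w = 1 := by
  rw [weight, Nat.card_congr (Equiv.subtypeEquivRight h)]
  exact Nat.card_unique

lemma IsArc.linearIndependent {k : ℕ} {S : Set (Fin k → F)} (hS : IsArc S) {ι : Type*} [Fintype ι]
    (hι : Fintype.card ι = k) {v : ι → Fin k → F} (hv : Function.Injective v)
    (hvS : ∀ i, v i ∈ S) : LinearIndependent F v := by
  classical
  have hmem : ∀ i, v i ∈ univ.image v := fun i => mem_image_of_mem v (mem_univ i)
  have hT := hS (univ.image v) (by simpa [Set.range_subset_iff] using hvS)
    (by rw [card_image_of_injective _ hv, card_univ, hι])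
  exact hT.comp (fun i => ⟨v i, hmem i⟩) fun i j hij => hv (congrArg Subtype.val hij)

lemma sdiff_pair_subset_erase_iff {α : Type*} [DecidableEq α] {E : Finset α} {a b x : α}
    (hx : x ∈ E) : E \ {a, b} ⊆ E.erase x ↔ x = a ∨ x = b := by
  simp only [subset_iff, mem_sdiff, mem_insert, mem_singleton, mem_erase]
  constructor
  · intro h
    by_contra hab
    exact (h ⟨hx, hab⟩).1 rfl
  · rintro hxab y ⟨hy, hyab⟩
    exact ⟨fun hyx => hyab (hyx ▸ hxab), hy⟩

section detWith

variable {k m : ℕ} (g : Fin m → Fin k → F) {C : Finset (Fin m)} {u : Fin m}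

lemma detWith_eq_det (h : C.card + 1 = k) :
    detWith g (g u) C =
      (Matrix.of (g ∘ Fin.cons u (C.orderEmbOfFin rfl) ∘ Fin.cast h.symm)).det := by
  rw [detWith, dif_pos h, ← Function.comp_assoc, Fin.comp_cons]
  rfl

lemma detWith_eq_zero_of_mem (hu : u ∈ C) : detWith g (g u) C = 0 := by
  by_cases h : C.card + 1 = k
  · have hrows : ¬ Function.Injective (Fin.cons u (C.orderEmbOfFin rfl)) := by
      rw [Fin.cons_injective_iff, range_orderEmbOfFin]
      exact fun h' => h'.1 hu
    obtain ⟨i, j, hij, hne⟩ := Function.not_injective_iff.mp hrows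
    rw [detWith_eq_det g h]
    refine Matrix.det_zero_of_row_eq (i := Fin.cast h i) (j := Fin.cast h j)
      (by simpa [Fin.ext_iff] using hne) ?_
    funext x
    simp [hij]
  · exact dif_neg h

lemma detWith_ne_zero (hg : Function.Injective g) (hG : IsArc (Set.range g))
    (h : C.card + 1 = k) (hu : u ∉ C) : detWith g (g u) C ≠ 0 := by
  have hrows : Function.Injective (Fin.cons u (C.orderEmbOfFin rfl)) := by
    rw [Fin.cons_injective_iff, range_orderEmbOfFin]
    exact ⟨hu, (C.orderEmbOfFin rfl).injective⟩
  have hli := hG.linearIndependent (Fintype.card_fin k)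
    (hg.comp (hrows.comp (Fin.cast_injective h.symm))) fun i => Set.mem_range_self _
  rw [detWith_eq_det g h]
  exact (Matrix.isUnit_iff_isUnit_det _).mp (Matrix.linearIndependent_rows_iff_isUnit.mp hli)
    |>.ne_zero

variable {E : Finset (Fin m)}

lemma prod_detWith_compl_eq_zero (hCE : ¬ C ⊆ E) :
    ∏ u ∈ univ \ E, detWith g (g u) C = 0 := by
  obtain ⟨v, hvC, hvE⟩ := not_subset.mp hCE
  exact prod_eq_zero (mem_sdiff.mpr ⟨mem_univ v, hvE⟩) (detWith_eq_zero_of_mem g hvC)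

lemma prod_detWith_compl_ne_zero (hg : Function.Injective g) (hG : IsArc (Set.range g))
    (h : C.card + 1 = k) (hCE : C ⊆ E) : ∏ u ∈ univ \ E, detWith g (g u) C ≠ 0 :=
  prod_ne_zero_iff.mpr fun _ hu =>
    detWith_ne_zero g hg hG h fun huC => (mem_sdiff.mp hu).2 (hCE huC)

end detWith

section triangle

variable {k m : ℕ} {E : Finset (Fin m)}

def pairColumn (hE : E.card = k) (hm : k ≤ m) {a b : Fin m} (ha : a ∈ E) (hb : b ∈ E)
    (hab : a ≠ b) : {AE : Finset (Fin m) × Finset (Fin m) //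
      AE.2.card = m - (m - k) ∧ AE.1 ⊆ AE.2 ∧ AE.1.card = k - 2} :=
  ⟨(E \ {a, b}, E), show E.card = m - (m - k) by omega, sdiff_subset, by
    rw [card_sdiff_of_subset (insert_subset ha (singleton_subset_iff.mpr hb)), card_pair hab, hE]⟩

lemma arcMatrix_mulVec_triangle_ne_zero_iff (g : Fin m → Fin k → F) (hg : Function.Injective g)
    (hG : IsArc (Set.range g)) (h2 : (2 : F) ≠ 0) (hE : E.card = k) (hm : k ≤ m)
    {a b c : Fin m} (ha : a ∈ E) (hb : b ∈ E) (hc : c ∈ E) (hab : a ≠ b) (hac : a ≠ c)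
    (hbc : b ≠ c) (C : {C : Finset (Fin m) // C.card = k - 1}) :
    (arcMatrix g (m - k)).mulVec (Pi.single (pairColumn hE hm ha hb hab) 1 +
        Pi.single (pairColumn hE hm ha hc hac) 1 - Pi.single (pairColumn hE hm hb hc hbc) 1) C ≠ 0
      ↔ C.1 = E.erase a := by
  have hk : 0 < k := hE ▸ card_pos.mpr ⟨a, ha⟩
  have hC := C.2
  simp only [Matrix.mulVec_sub, Matrix.mulVec_add, Matrix.mulVec_single_one, Pi.add_apply,
    Pi.sub_apply, Matrix.col_apply, arcMatrix, pairColumn]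
  by_cases hCE : C.1 ⊆ E
  · obtain ⟨x, hxC, hx⟩ := exists_eq_insert_iff.mpr ⟨hCE, by omega⟩
    have hxE : x ∈ E := hx ▸ mem_insert_self x C.1
    have hCx : C.1 = E.erase x := by rw [← hx, erase_insert hxC]
    have hP := prod_detWith_compl_ne_zero g hg hG (by omega) hCE
    rw [hCx] at hP ⊢
    simp only [sdiff_pair_subset_erase_iff hxE, erase_inj _ hxE]
    by_cases hxa : x = a
    · subst hxa
      simp [hab, hac, ← two_mul, h2, hP]
    · by_cases hxb : x = b
      · subst hxb
        simp [hxa, hbc]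
      · by_cases hxc : x = c
        · subst hxc
          simp [hxa, hxb]
        · simp [hxa, hxb, hxc]
  · simp only [prod_detWith_compl_eq_zero g hCE, ite_self, sub_zero, add_zero, ne_eq,
      not_true_eq_false, false_iff]
    exact fun hCa => hCE (hCa ▸ erase_subset a E)

end triangle

theorem stmt18 [Fintype F] {k m : ℕ} (hk : 3 ≤ k)
    (hq : Odd (Fintype.card F))
    (g : Fin m ↪ (Fin k → F)) (hG : IsArc (Set.range g)) (hm : k ≤ m) :
    ∃ x, weight ((arcMatrix (⇑g) (m - k)).mulVec x) = 1 := by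
  obtain ⟨E, -, hE⟩ := exists_subset_card_eq (s := (univ : Finset (Fin m))) (by simpa using hm)
  obtain ⟨a, ha, b, hb, c, hc, hab, hac, hbc⟩ := two_lt_card.mp (show 2 < E.card by omega)
  have hEa : (E.erase a).card = k - 1 := by rw [card_erase_of_mem ha, hE]
  exact ⟨_, weight_eq_one_of_ne_zero_iff ⟨E.erase a, hEa⟩ fun C =>
    (arcMatrix_mulVec_triangle_ne_zero_iff g g.injective hG (two_ne_zero_of_odd_card hq) hE hm
      ha hb hc hab hac hbc C).trans (Subtype.ext_iff (a1 := C) (a2 := ⟨E.erase a, hEa⟩)).symm⟩
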